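/- arXiv:2306.17823 — 2 statements merged into one kernel-verified Lean document; each statement's English description precedes it below -/
import Mathlib

section
/- Let G be a group generated by elements s₀, …, s_g each satisfying s_i^p = 1 for a prime p, and let Γ ≤ G be the subgroup generated by the elements γ_{i,j} = s₀^{j−1} s_i s₀^{−j} for 0 ≤ i ≤ g and 1 ≤ j ≤ p−1. Then Γ is a normal subgroup of G and the quotient G/Γ is cyclic of order dividing p. -/
/-!
Write `t = s₀` and `γ_{i,j} = t^(j-1) s_i t^(-j)`. Conjugation by `t` shifts `γ_{i,j}` to
`γ_{i,j+1}`, and `γ_{i,1} ⋯ γ_{i,p-1}` telescopes to `s_i^(p-1) t^(-(p-1)) = s_i⁻¹ t`, so the one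
shifted generator outside the list, `γ_{i,p} = t⁻¹ s_i`, still lies in `Γ`. Hence `t Γ t⁻¹ ≤ Γ`,
which suffices for `t` to normalise `Γ` because `t` has finite order. As `s_i t⁻¹ = γ_{i,1} ∈ Γ`,
every `s_i` normalises `Γ` too, and every `s_i` has the same image as `t` in `G ⧸ Γ`; so the
quotient is generated by the image of `t`, whose order divides `p`.
-/

open Subgroup

section

variable {G : Type*} [Group G]

theorem pow_sub_one_eq_inv_of_pow_eq_one {a : G} {n : ℕ} (hn : n ≠ 0) (ha : a ^ n = 1) :
    a ^ (n - 1) = a⁻¹ :=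
  eq_inv_of_mul_eq_one_left (by rw [pow_sub_one_mul hn, ha])

namespace Subgroup

theorem pow_mul_inv_pow_mem {H : Subgroup G} {a b : G} {n : ℕ}
    (h : ∀ k < n, b ^ k * a * (b ^ (k + 1))⁻¹ ∈ H) : a ^ n * (b ^ n)⁻¹ ∈ H := by
  induction n with
  | zero => simp
  | succ n ih =>
    have hstep := mul_mem (ih fun k hk => h k (by omega)) (h n n.lt_succ_self)
    convert hstep using 1
    rw [pow_succ]
    group

theorem conj_pow_mem {H : Subgroup G} {g : G} (hconj : ∀ h ∈ H, g * h * g⁻¹ ∈ H) (k : ℕ)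
    {h : G} (hh : h ∈ H) : g ^ k * h * (g ^ k)⁻¹ ∈ H := by
  induction k with
  | zero => simpa using hh
  | succ k ih =>
    rw [pow_succ', show g * g ^ k * h * (g * g ^ k)⁻¹ = g * (g ^ k * h * (g ^ k)⁻¹) * g⁻¹ by
      group]
    exact hconj _ ih

theorem mem_normalizer_of_conj_mem {H : Subgroup G} {g : G} (hg : IsOfFinOrder g)
    (hconj : ∀ h ∈ H, g * h * g⁻¹ ∈ H) : g ∈ normalizer (H : Set G) := by
  obtain ⟨k, hk : g ^ k = g⁻¹⟩ : g⁻¹ ∈ Submonoid.powers g :=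
    hg.mem_powers_iff_mem_zpowers.2 (inv_mem (mem_zpowers g))
  refine mem_normalizer_iff.2 fun h => ⟨hconj h, fun hh => ?_⟩
  have hconj_inv := conj_pow_mem hconj k hh
  rwa [hk, inv_inv, show g⁻¹ * (g * h * g⁻¹) * g = h by group] at hconj_inv

theorem conj_mem_closure {S : Set G} {g : G} (hS : ∀ x ∈ S, g * x * g⁻¹ ∈ closure S) :
    ∀ h ∈ closure S, g * h * g⁻¹ ∈ closure S :=
  fun _ hh => (closure_le ((closure S).comap (MulAut.conj g).toMonoidHom)).2 hS hh

end Subgroup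

theorem zpowers_eq_top_of_apply_eq {H : Type*} [Group H] {ι : Type*} {s : ι → G}
    (hgen : closure (Set.range s) = ⊤) {f : G →* H} (hf : Function.Surjective f) {x : H}
    (hx : ∀ i, f (s i) = x) : zpowers x = ⊤ := by
  have hle : closure (Set.range s) ≤ (zpowers x).comap f :=
    (closure_le _).2 (Set.range_subset_iff.2 fun i => by simp [hx i])
  refine eq_top_iff.2 fun y _ => ?_
  obtain ⟨g, rfl⟩ := hf y
  exact hle (hgen ▸ mem_top g)

section Gamma

variable {ι : Type*} (s : ι → G) (t : G) (p : ℕ)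

/-- `gammaElem s t i k` is the paper's `γ_{i,k+1}`, with `s₀` replaced by an arbitrary `t`. -/
def gammaElem (i : ι) (k : ℕ) : G := t ^ k * s i * (t ^ (k + 1))⁻¹

def gammaSubgroup : Subgroup G :=
  closure {x | ∃ i k, k + 1 < p ∧ x = gammaElem s t i k}

variable {s t p}

theorem gammaElem_mem {i : ι} {k : ℕ} (hk : k + 1 < p) :
    gammaElem s t i k ∈ gammaSubgroup s t p :=
  subset_closure ⟨i, k, hk, rfl⟩

theorem conj_gammaElem (i : ι) (k : ℕ) :
    t * gammaElem s t i k * t⁻¹ = gammaElem s t i (k + 1) := by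
  simp only [gammaElem, pow_succ' t]
  group

theorem mul_inv_mem_gammaSubgroup (hp : 1 < p) (i : ι) : s i * t⁻¹ ∈ gammaSubgroup s t p := by
  simpa [gammaElem] using gammaElem_mem (s := s) (t := t) (i := i) hp

theorem inv_mul_mem_gammaSubgroup (hp : p ≠ 0) {i : ι} (hs : s i ^ p = 1) (ht : t ^ p = 1) :
    (s i)⁻¹ * t ∈ gammaSubgroup s t p := by
  have htelescope : s i ^ (p - 1) * (t ^ (p - 1))⁻¹ ∈ gammaSubgroup s t p :=
    pow_mul_inv_pow_mem fun k hk => gammaElem_mem (by omega)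
  rwa [pow_sub_one_eq_inv_of_pow_eq_one hp hs, pow_sub_one_eq_inv_of_pow_eq_one hp ht,
    inv_inv] at htelescope

theorem conj_mem_gammaSubgroup (hp : p ≠ 0) (hs : ∀ i, s i ^ p = 1) (ht : t ^ p = 1) :
    ∀ h ∈ gammaSubgroup s t p, t * h * t⁻¹ ∈ gammaSubgroup s t p := by
  refine conj_mem_closure ?_
  rintro _ ⟨i, k, hk, rfl⟩
  rw [conj_gammaElem]
  obtain hlt | hlast : k + 2 < p ∨ k + 1 = p - 1 := by omega
  · exact gammaElem_mem hlt
  · have hwrap : gammaElem s t i (k + 1) = ((s i)⁻¹ * t)⁻¹ := by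
      rw [gammaElem, hlast, Nat.sub_add_cancel (Nat.one_le_iff_ne_zero.2 hp), ht,
        pow_sub_one_eq_inv_of_pow_eq_one hp ht]
      group
    rw [hwrap]
    exact inv_mem (inv_mul_mem_gammaSubgroup hp (hs i) ht)

theorem gammaSubgroup_normal (hp : 1 < p) (hgen : closure (Set.range s) = ⊤)
    (hs : ∀ i, s i ^ p = 1) (ht : t ^ p = 1) : (gammaSubgroup s t p).Normal := by
  have ht_norm : t ∈ normalizer (gammaSubgroup s t p : Set G) :=
    mem_normalizer_of_conj_mem (isOfFinOrder_iff_pow_eq_one.2 ⟨p, by omega, ht⟩)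
      (conj_mem_gammaSubgroup (by omega) hs ht)
  have hs_norm (i : ι) : s i ∈ normalizer (gammaSubgroup s t p : Set G) := by
    simpa using mul_mem (le_normalizer (mul_inv_mem_gammaSubgroup hp i)) ht_norm
  rw [← normalizer_eq_top_iff, eq_top_iff, ← hgen, closure_le]
  exact Set.range_subset_iff.2 hs_norm

theorem zpowers_mk_gammaSubgroup_eq_top [(gammaSubgroup s t p).Normal] (hp : p ≠ 0)
    (hgen : closure (Set.range s) = ⊤) (hs : ∀ i, s i ^ p = 1) (ht : t ^ p = 1) :
    zpowers (t : G ⧸ gammaSubgroup s t p) = ⊤ :=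
  zpowers_eq_top_of_apply_eq hgen (QuotientGroup.mk'_surjective _)
    fun _ => QuotientGroup.eq.2 (inv_mul_mem_gammaSubgroup hp (hs _) ht)

end Gamma

end

/-- If `G` is generated by `s₀, …, s_g` with `s_i^p = 1` (`p` prime), and `Γ` is the
subgroup generated by the `γ_{i,j} = s₀^(j-1) s_i s₀^(-j)` for `0 ≤ i ≤ g`,
`1 ≤ j ≤ p - 1`, then `Γ` is normal in `G` and `G ⧸ Γ` is cyclic of order
dividing `p`. -/
theorem stmt_6 {G : Type*} [Group G] (p g : ℕ) (hp : p.Prime)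
    (s : Fin (g + 1) → G) (hgen : Subgroup.closure (Set.range s) = ⊤)
    (hord : ∀ i, s i ^ p = 1)
    (Γ : Subgroup G)
    (hΓ : Γ = Subgroup.closure
      {x : G | ∃ (i : Fin (g + 1)) (j : ℕ), 1 ≤ j ∧ j ≤ p - 1 ∧
        x = s 0 ^ (j - 1) * s i * (s 0 ^ j)⁻¹}) :
    Γ.Normal ∧ ∀ hN : Γ.Normal,
      letI := hN
      IsCyclic (G ⧸ Γ) ∧ Nat.card (G ⧸ Γ) ∣ p := by
  obtain rfl : Γ = gammaSubgroup s (s 0) p := by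
    rw [hΓ, gammaSubgroup]
    congr 1
    ext x
    constructor
    · rintro ⟨i, j, hj1, hjp, rfl⟩
      exact ⟨i, j - 1, by omega, by rw [gammaElem, Nat.sub_add_cancel hj1]⟩
    · rintro ⟨i, k, hk, rfl⟩
      exact ⟨i, k + 1, by omega, by omega, rfl⟩
  refine ⟨gammaSubgroup_normal hp.one_lt hgen hord (hord 0), fun _ => ?_⟩
  have htop := zpowers_mk_gammaSubgroup_eq_top hp.ne_zero hgen hord (hord 0)
  refine ⟨isCyclic_iff_exists_zpowers_eq_top.2 ⟨_, htop⟩, ?_⟩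
  rw [← orderOf_eq_card_of_forall_mem_zpowers fun y => htop ▸ mem_top y]
  exact orderOf_dvd_of_pow_eq_one (by rw [← QuotientGroup.mk_pow, hord 0, QuotientGroup.mk_one])
end

section
/- Let p be a prime, g ≥ 1, and let G = C₀ ∗ C₁ ∗ ⋯ ∗ C_g be the free product of g+1 cyclic groups of order p with generators s₀, …, s_g. Let φ : G → ℤ/pℤ be the homomorphism sending each s_i to 1. Then the kernel of φ is a free group of rank (p − 1)g, and it is generated by the elements γ_{i,j} = s₀^{j−1} s_i s₀^{−j} for 1 ≤ i ≤ g and 1 ≤ j ≤ p − 1. -/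
/-!
The subgroup `N` spanned by the `γ_{i,j} = s₀ ^ j s_i s₀ ^ -(j+1)` is normalised by `s₀`, since
conjugation by `s₀` shifts `j`, and the cycle closes because `s_i ^ p = 1` gives
`γ_{i,p-1} = (γ_{i,0} ⋯ γ_{i,p-2})⁻¹`. As `s_i = γ_{i,0} s₀`, every element is `s₀ ^ k n` with
`n ∈ N`, and it lies in the kernel exactly when `s₀ ^ k = 1`.

For freeness, let `F` be free on symbols `x_{i,j}` and let `t` generate `ℤ/p` in the regular wreath
product `F ≀ ℤ/p`. Send `s₀ ↦ t` and `s_i ↦ a_i⁻¹ t a_i`, where the base element `a_i` takes the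
value `x_{i,0} ⋯ x_{i,j-1}` at `-j`; this has order `p`, being conjugate to `t`. The image of
`γ_{i,j}` is a base element whose value at `0` is `a_i(-j)⁻¹ a_i(-j-1) = x_{i,j}`, so evaluation at
`0` retracts the kernel onto `F` and sends the `γ_{i,j}` to a free basis.
-/

open Monoid Multiplicative

namespace RegularWreathProduct

variable {D Q K : Type*} [Group D] [Group Q] [Group K]

/-- On the kernel of `rightHom ∘ f` the product of `D ≀ᵣ Q` is pointwise in the `left` part. -/
def leftEvalOnKer (f : K →* D ≀ᵣ Q) {φ : K →* Q} (hf : rightHom.comp f = φ) (q : Q) :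
    φ.ker →* D where
  toFun x := (f x).left q
  map_one' := by simp [one_left]
  map_mul' x y := by
    have hx : (f x).right = 1 := by
      rw [← rightHom_eq_right, ← MonoidHom.comp_apply, hf]
      exact x.2
    simp [mul_left, hx]

def ofLeft : (Q → D) →* D ≀ᵣ Q where
  toFun f := ⟨f, 1⟩
  map_one' := rfl
  map_mul' f g := by ext <;> simp [mul_left, mul_right]

@[simp]
theorem left_ofLeft (f : Q → D) : (ofLeft f : D ≀ᵣ Q).left = f := rfl

theorem inl_mul_ofLeft_mul_inv (q : Q) (f : Q → D) :
    inl q * ofLeft f * (inl q)⁻¹ = ofLeft fun x => f (q⁻¹ * x) := by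
  ext <;> simp [ofLeft, mul_left, mul_right, inv_left, inv_right, left_inl, right_inl]

end RegularWreathProduct

noncomputable def Subgroup.equivFreeGroupOfRetraction {G B : Type*} [Group G] (H : Subgroup G)
    (γ : B → G) (hγ : Subgroup.closure (Set.range γ) = H) (r : H →* FreeGroup B)
    (hr : ∀ b (hb : γ b ∈ H), r ⟨γ b, hb⟩ = FreeGroup.of b) : H ≃* FreeGroup B :=
  have hmem : ∀ b, γ b ∈ H := fun b => hγ ▸ Subgroup.subset_closure ⟨b, rfl⟩
  let ψ : FreeGroup B →* H := FreeGroup.lift fun b => ⟨γ b, hmem b⟩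
  have hrψ : r.comp ψ = MonoidHom.id _ := FreeGroup.ext_hom _ _ fun b => by simp [ψ, hr]
  have hψ : H.subtype.comp ψ = FreeGroup.lift γ := FreeGroup.ext_hom _ _ fun b => by simp [ψ]
  have surj : Function.Surjective ψ := by
    rintro ⟨x, hx⟩
    rw [← hγ, ← FreeGroup.range_lift_eq_closure] at hx
    obtain ⟨w, rfl⟩ := hx
    exact ⟨w, Subtype.ext (DFunLike.congr_fun hψ w)⟩
  (MulEquiv.ofBijective ψ
    ⟨Function.LeftInverse.injective (g := r) (DFunLike.congr_fun hrψ), surj⟩).symm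

abbrev CyclicFreeProduct (ι : Type*) (p : ℕ) := CoprodI fun _ : ι => Multiplicative (ZMod p)

namespace CyclicFreeProduct

variable {ι : Type*} (i₀ : ι) {p : ℕ}

section Generation

def gen (i : ι) : CyclicFreeProduct ι p := CoprodI.of (i := i) (ofAdd 1)

variable (p) in
def degree : CyclicFreeProduct ι p →* Multiplicative (ZMod p) :=
  CoprodI.lift fun _ => MonoidHom.id _

@[simp]
theorem degree_of (i : ι) (m : Multiplicative (ZMod p)) :
    degree p (CoprodI.of (i := i) m) = m :=
  CoprodI.lift_of _ _

theorem gen_pow_self (i : ι) : (gen i : CyclicFreeProduct ι p) ^ p = 1 := by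
  rw [gen, ← map_pow, ← ofAdd_nsmul, nsmul_one, ZMod.natCast_self, ofAdd_zero, map_one]

theorem of_mem_of_gen_mem {H : Subgroup (CyclicFreeProduct ι p)} {i : ι} (hi : gen i ∈ H)
    (m : Multiplicative (ZMod p)) : CoprodI.of (i := i) m ∈ H := by
  obtain ⟨k, hk⟩ := ZMod.intCast_surjective (toAdd m)
  have : m = ofAdd 1 ^ k := by rw [← ofAdd_zsmul, zsmul_one, hk, ofAdd_toAdd]
  rw [this, map_zpow]
  exact zpow_mem hi k

theorem eq_top_of_gen_mem {H : Subgroup (CyclicFreeProduct ι p)} (h : ∀ i, gen i ∈ H) :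
    H = ⊤ := by
  refine (Subgroup.eq_top_iff' H).mpr fun x => ?_
  induction x using CoprodI.induction_on with
  | one => exact one_mem H
  | of i m => exact of_mem_of_gen_mem (h i) m
  | mul x y hx hy => exact mul_mem hx hy

variable (p) in
def γ (i : ι) (j : ℤ) : CyclicFreeProduct ι p := gen i₀ ^ j * gen i * gen i₀ ^ (-(j + 1))

theorem γ_natCast (i : ι) (j : ℕ) :
    γ i₀ p i j = gen i₀ ^ j * gen i * (gen i₀ ^ (j + 1))⁻¹ := by
  rw [γ, zpow_neg, ← Nat.cast_succ, zpow_natCast, zpow_natCast]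

theorem gen_zpow_mul_γ (i : ι) (j k : ℤ) :
    gen i₀ ^ k * γ i₀ p i j * (gen i₀ ^ k)⁻¹ = γ i₀ p i (j + k) := by
  simp only [γ]
  group

theorem γ_emod [NeZero p] (i : ι) (j : ℤ) : γ i₀ p i (j % p) = γ i₀ p i j := by
  have hperiod : gen i₀ ^ ((p : ℤ) * (j / p)) = (1 : CyclicFreeProduct ι p) := by
    rw [zpow_mul, zpow_natCast, gen_pow_self, one_zpow]
  conv_rhs => rw [← Int.emod_add_mul_ediv j p, ← gen_zpow_mul_γ, hperiod]
  group

variable (p) in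
abbrev BasisIndex := {i // i ≠ i₀} × Fin (p - 1)

variable (p) in
def basisElt (b : BasisIndex i₀ p) : CyclicFreeProduct ι p := γ i₀ p b.1 b.2

variable (p) in
abbrev span : Subgroup (CyclicFreeProduct ι p) := Subgroup.closure (Set.range (basisElt i₀ p))

variable {i₀}

theorem gen_pow_mul_gen_zpow_mem_span {i : ι} (hi : i ≠ i₀) {n : ℕ} (hn : n ≤ p - 1) :
    gen i ^ n * gen i₀ ^ (-(n : ℤ)) ∈ span i₀ p := by
  induction n with
  | zero => simp
  | succ n ih =>
    have hγ : γ i₀ p i n ∈ span i₀ p :=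
      Subgroup.subset_closure ⟨(⟨i, hi⟩, ⟨n, by omega⟩), rfl⟩
    convert mul_mem (ih (by omega)) hγ using 1
    simp only [γ, pow_succ, Nat.cast_succ, zpow_neg, zpow_add, zpow_natCast, zpow_one]
    group

theorem γ_mem_span [NeZero p] (i : ι) (j : ℤ) : γ i₀ p i j ∈ span i₀ p := by
  by_cases hi : i = i₀
  · have : γ i₀ p i₀ j = 1 := by simp only [γ]; group
    rw [hi, this]
    exact one_mem _
  rw [← γ_emod]
  obtain ⟨n, hn⟩ : ∃ n : ℕ, j % p = n :=
    Int.eq_ofNat_of_zero_le (Int.emod_nonneg _ (by simp [NeZero.ne]))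
  have hnp : n < p := by
    have := Int.emod_lt_of_pos j (by simp [Nat.pos_of_neZero p] : (0 : ℤ) < p)
    omega
  rw [hn]
  rcases Nat.lt_or_ge n (p - 1) with h | h
  · exact Subgroup.subset_closure ⟨(⟨i, hi⟩, ⟨n, h⟩), rfl⟩
  · obtain rfl : p = n + 1 := by omega
    have hinv : (gen i ^ n)⁻¹ = (gen i : CyclicFreeProduct ι (n + 1)) :=
      inv_eq_of_mul_eq_one_right (by rw [← pow_succ, gen_pow_self])
    have h0 : (gen i₀ : CyclicFreeProduct ι (n + 1)) ^ (-((n : ℤ) + 1)) = 1 := by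
      rw [zpow_neg, ← Nat.cast_succ, zpow_natCast, gen_pow_self, inv_one]
    convert inv_mem (gen_pow_mul_gen_zpow_mem_span (p := n + 1) hi le_rfl) using 1
    rw [Nat.add_sub_cancel, mul_inv_rev, hinv, zpow_neg, inv_inv, γ, h0, mul_one]

theorem gen_zpow_conj_mem_span [NeZero p] (k : ℤ) {x : CyclicFreeProduct ι p}
    (hx : x ∈ span i₀ p) : gen i₀ ^ k * x * (gen i₀ ^ k)⁻¹ ∈ span i₀ p := by
  have hmap : (span i₀ p).map (MulAut.conj (gen i₀ ^ k)).toMonoidHom ≤ span i₀ p := by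
    rw [MonoidHom.map_closure, Subgroup.closure_le]
    rintro _ ⟨_, ⟨b, rfl⟩, rfl⟩
    rw [MulEquiv.coe_toMonoidHom, MulAut.conj_apply, basisElt, gen_zpow_mul_γ]
    exact γ_mem_span (i₀ := i₀) (p := p) b.1 (b.2 + k)
  exact hmap ⟨x, hx, rfl⟩

theorem gen_mem_normalizer_span [NeZero p] :
    gen i₀ ∈ Subgroup.normalizer (span i₀ p : Set (CyclicFreeProduct ι p)) := by
  refine Subgroup.mem_normalizer_iff.mpr fun x => ⟨fun hx => ?_, fun hx => ?_⟩
  · simpa using gen_zpow_conj_mem_span 1 hx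
  · simpa [mul_assoc] using gen_zpow_conj_mem_span (-1) hx

theorem zpowers_sup_span [NeZero p] : Subgroup.zpowers (gen i₀) ⊔ span i₀ p = ⊤ :=
  eq_top_of_gen_mem fun i => by
    have : gen i = γ i₀ p i 0 * gen i₀ := by simp [γ]
    rw [this]
    exact mul_mem (Subgroup.mem_sup_right (γ_mem_span i 0))
      (Subgroup.mem_sup_left (Subgroup.mem_zpowers _))

theorem span_le_ker_degree : span i₀ p ≤ (degree p).ker := by
  rw [Subgroup.closure_le]
  rintro _ ⟨b, rfl⟩
  simp only [SetLike.mem_coe, MonoidHom.mem_ker, basisElt, γ, gen, map_mul, map_zpow, degree_of]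
  group

theorem span_eq_ker_degree [NeZero p] : span i₀ p = (degree p).ker := by
  refine le_antisymm span_le_ker_degree fun x hx => ?_
  have hx' : x ∈ ((Subgroup.zpowers (gen i₀) ⊔ span i₀ p : Subgroup _) :
      Set (CyclicFreeProduct ι p)) := by
    simp [zpowers_sup_span]
  rw [Subgroup.coe_mul_of_left_le_normalizer_right _ _
    (Subgroup.zpowers_le.mpr gen_mem_normalizer_span)] at hx'
  obtain ⟨_, ⟨k, rfl⟩, y, hy, rfl⟩ := hx'
  -- `s₀ ^ k` lies in the factor `C₀`, on which `degree` is injective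
  have hk : gen i₀ ^ k = CoprodI.of (M := fun _ : ι => Multiplicative (ZMod p)) (i := i₀)
      (degree p (gen i₀ ^ k)) := by
    simp [gen, map_zpow]
  have hdeg : degree p (gen i₀ ^ k) = 1 := by
    rwa [MonoidHom.mem_ker, map_mul, span_le_ker_degree hy, mul_one] at hx
  show gen i₀ ^ k * y ∈ span i₀ p
  rwa [hk, hdeg, map_one, one_mul]

end Generation

section Retraction

open RegularWreathProduct

variable (p)

open Classical in
noncomputable def letters (i : ι) : List (FreeGroup (BasisIndex i₀ p)) :=
  if h : i = i₀ then [] else List.ofFn fun t : Fin (p - 1) => FreeGroup.of (⟨i, h⟩, t)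

noncomputable def prefixProd (i : ι) (x : Multiplicative (ZMod p)) :
    FreeGroup (BasisIndex i₀ p) :=
  ((letters i₀ p i).take (toAdd x⁻¹).val).prod

noncomputable def toWreath :
    CyclicFreeProduct ι p →* FreeGroup (BasisIndex i₀ p) ≀ᵣ Multiplicative (ZMod p) :=
  CoprodI.lift fun i => (MulAut.conj (ofLeft (prefixProd i₀ p i))⁻¹).toMonoidHom.comp inl

variable {i₀ p}

theorem toWreath_gen (i : ι) : toWreath i₀ p (gen i) =
    (ofLeft (prefixProd i₀ p i))⁻¹ * inl (ofAdd 1) * ofLeft (prefixProd i₀ p i) := by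
  simp [toWreath, gen, CoprodI.lift_of]

theorem toWreath_gen_self : toWreath i₀ p (gen i₀) = inl (ofAdd 1) := by
  have : prefixProd i₀ p i₀ = 1 := by ext x; simp [prefixProd, letters]
  rw [toWreath_gen, this, map_one]
  group

theorem rightHom_comp_toWreath : rightHom.comp (toWreath i₀ p) = degree p :=
  CoprodI.ext_hom _ _ fun i => MonoidHom.ext fun m => by
    simp [toWreath, degree, rightHom_eq_right]

theorem toWreath_γ (i : ι) (j : ℕ) : toWreath i₀ p (γ i₀ p i j) = ofLeft fun x =>
    (prefixProd i₀ p i ((ofAdd 1 ^ j)⁻¹ * x))⁻¹ *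
      prefixProd i₀ p i ((ofAdd 1 ^ (j + 1))⁻¹ * x) := by
  have : toWreath i₀ p (γ i₀ p i j) =
      (inl (ofAdd 1 ^ j) * ofLeft (prefixProd i₀ p i)⁻¹ * (inl (ofAdd 1 ^ j))⁻¹) *
      (inl (ofAdd 1 ^ (j + 1)) * ofLeft (prefixProd i₀ p i) * (inl (ofAdd 1 ^ (j + 1)))⁻¹) := by
    rw [γ, map_mul, map_mul, map_zpow, map_zpow, toWreath_gen_self, toWreath_gen, map_inv,
      map_pow, map_pow, pow_succ]
    group
  rw [this, inl_mul_ofLeft_mul_inv, inl_mul_ofLeft_mul_inv, ← map_mul]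
  rfl

theorem prefixProd_ofAdd_pow_inv (i : ι) {n : ℕ} (hn : n < p) :
    prefixProd i₀ p i (ofAdd 1 ^ n)⁻¹ = ((letters i₀ p i).take n).prod := by
  rw [prefixProd, inv_inv, toAdd_pow, toAdd_ofAdd, nsmul_one, ZMod.val_cast_of_lt hn]

theorem toWreath_basisElt_left_one (b : BasisIndex i₀ p) :
    (toWreath i₀ p (basisElt i₀ p b)).left 1 = FreeGroup.of b := by
  obtain ⟨⟨i, hi⟩, t⟩ := b
  have hlen : (t : ℕ) < (letters i₀ p i).length := by simp [letters, hi]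
  rw [basisElt, toWreath_γ, left_ofLeft, mul_one, mul_one, prefixProd_ofAdd_pow_inv _ (by omega),
    prefixProd_ofAdd_pow_inv _ (by omega), List.prod_take_succ _ _ hlen, inv_mul_cancel_left]
  simp [letters, hi]

end Retraction

noncomputable def kerDegreeEquiv [NeZero p] (i₀ : ι) :
    (degree p : CyclicFreeProduct ι p →* _).ker ≃* FreeGroup (BasisIndex i₀ p) :=
  (degree p).ker.equivFreeGroupOfRetraction (basisElt i₀ p) span_eq_ker_degree
    (RegularWreathProduct.leftEvalOnKer (toWreath i₀ p) rightHom_comp_toWreath 1)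
    fun b _ => toWreath_basisElt_left_one b

theorem card_basisIndex [Fintype ι] [DecidableEq ι] (i₀ : ι) :
    Fintype.card (BasisIndex i₀ p) = (Fintype.card ι - 1) * (p - 1) := by
  simp [BasisIndex, Fintype.card_subtype_compl]

theorem range_basisElt (i₀ : ι) : Set.range (basisElt i₀ p) =
    {x | ∃ (i : ι) (j : ℕ), i ≠ i₀ ∧ 1 ≤ j ∧ j ≤ p - 1 ∧
      x = gen i₀ ^ (j - 1) * gen i * (gen i₀ ^ j)⁻¹} := by
  ext x
  constructor
  · rintro ⟨⟨⟨i, hi⟩, t⟩, rfl⟩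
    refine ⟨i, t + 1, hi, by omega, by omega, ?_⟩
    rw [basisElt, γ_natCast, Nat.add_sub_cancel]
  · rintro ⟨i, j, hi, hj1, hj2, rfl⟩
    obtain ⟨j, rfl⟩ := Nat.exists_eq_add_of_le' hj1
    refine ⟨(⟨i, hi⟩, ⟨j, by omega⟩), ?_⟩
    rw [basisElt, γ_natCast, Nat.add_sub_cancel]

end CyclicFreeProduct

open CyclicFreeProduct in
theorem stmt_16_general (p g : ℕ) (hp : p.Prime)
    (s : Fin (g + 1) → Monoid.CoprodI fun _ : Fin (g + 1) => Multiplicative (ZMod p))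
    (hs : ∀ i, s i = Monoid.CoprodI.of (i := i) (Multiplicative.ofAdd (1 : ZMod p)))
    (φ : (Monoid.CoprodI fun _ : Fin (g + 1) => Multiplicative (ZMod p)) →*
      Multiplicative (ZMod p))
    (hφ : φ = Monoid.CoprodI.lift fun _ => MonoidHom.id (Multiplicative (ZMod p))) :
    Nonempty (φ.ker ≃* FreeGroup (Fin ((p - 1) * g))) ∧
    φ.ker = Subgroup.closure
      {x | ∃ (i : Fin (g + 1)) (j : ℕ), i ≠ 0 ∧ 1 ≤ j ∧ j ≤ p - 1 ∧
        x = s 0 ^ (j - 1) * s i * (s 0 ^ j)⁻¹} := by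
  have : NeZero p := ⟨hp.ne_zero⟩
  obtain rfl : s = gen := funext hs
  obtain rfl : φ = degree p := hφ
  have hcard : Fintype.card (BasisIndex (0 : Fin (g + 1)) p) = (p - 1) * g := by
    rw [card_basisIndex, Fintype.card_fin, Nat.add_sub_cancel, Nat.mul_comm]
  refine ⟨⟨(kerDegreeEquiv 0).trans
    (FreeGroup.freeGroupCongr (Fintype.equivFinOfCardEq hcard))⟩, ?_⟩
  rw [← span_eq_ker_degree (i₀ := 0), span, range_basisElt]

/-- Let `G = C₀ ∗ ⋯ ∗ C_g` be the free product of `g + 1` cyclic groups of order `p`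
(`p` prime) with generators `s₀, …, s_g`, and let `φ : G → ℤ/pℤ` send each `s_i` to
`1`.  Then `ker φ` is a free group of rank `(p - 1) g`, generated by the elements
`γ_{i,j} = s₀^(j-1) s_i s₀^(-j)` for `1 ≤ i ≤ g`, `1 ≤ j ≤ p - 1`. -/
theorem stmt_16 (p g : ℕ) (hp : p.Prime) (hg : 1 ≤ g)
    (s : Fin (g + 1) → Monoid.CoprodI fun _ : Fin (g + 1) => Multiplicative (ZMod p))
    (hs : ∀ i, s i = Monoid.CoprodI.of (i := i) (Multiplicative.ofAdd (1 : ZMod p)))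
    (φ : (Monoid.CoprodI fun _ : Fin (g + 1) => Multiplicative (ZMod p)) →*
      Multiplicative (ZMod p))
    (hφ : φ = Monoid.CoprodI.lift fun _ => MonoidHom.id (Multiplicative (ZMod p))) :
    Nonempty (φ.ker ≃* FreeGroup (Fin ((p - 1) * g))) ∧
    φ.ker = Subgroup.closure
      {x | ∃ (i : Fin (g + 1)) (j : ℕ), i ≠ 0 ∧ 1 ≤ j ∧ j ≤ p - 1 ∧
        x = s 0 ^ (j - 1) * s i * (s 0 ^ j)⁻¹} :=
  stmt_16_general p g hp s hs φ hφ
end
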